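/- Let w, w' ∈ W_n^{(k)} be such that w covers w'. Then the pair (w,w') is of type B3 if and only if the dual pair ((w')∨, w∨) is of type B4. -/

import Mathlib

/-- The hyperoctahedral group `W_n`: bijections `w : ℤ → ℤ` with `w (-i) = -w i`
and `w i = i` whenever `n < |i|`. -/
def SignedPerm (n : ℕ) (w : ℤ → ℤ) : Prop :=
  Function.Bijective w ∧ (∀ i : ℤ, w (-i) = -w i) ∧ (∀ i : ℤ, (n : ℤ) < |i| → w i = i)

/-- The number of inversions `#{(i,j) : 1 ≤ i < j ≤ n, w i > w j}`. -/
noncomputable def invCount (n : ℕ) (w : ℤ → ℤ) : ℕ :=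
  ((Finset.Icc (1 : ℤ) (n : ℤ) ×ˢ Finset.Icc (1 : ℤ) (n : ℤ)).filter
    (fun p => p.1 < p.2 ∧ w p.2 < w p.1)).card

/-- The length `ℓ(w) = inv(w) - Σ_{1 ≤ j ≤ n, w j < 0} w j`. -/
noncomputable def len (n : ℕ) (w : ℤ → ℤ) : ℤ :=
  (invCount n w : ℤ) - ∑ j ∈ (Finset.Icc (1 : ℤ) (n : ℤ)).filter (fun j => w j < 0), w j

/-- `w` is `k`-Grassmannian: `0 < w 1 < ⋯ < w k` and `w (k+1) < ⋯ < w n`. -/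
def Grassmannian (n k : ℕ) (w : ℤ → ℤ) : Prop :=
  SignedPerm n w ∧
  (∀ i : ℤ, 1 ≤ i → i ≤ (k : ℤ) → 0 < w i) ∧
  (∀ i j : ℤ, 1 ≤ i → i < j → j ≤ (k : ℤ) → w i < w j) ∧
  (∀ i j : ℤ, (k : ℤ) < i → i < j → j ≤ (n : ℤ) → w i < w j)

/-- A reflection of `W_n`: either the transposition pair `(i j)(-i -j)` with
`1 ≤ i < |j| ≤ n`, or the sign change `i ↔ -i` with `1 ≤ i ≤ n`. -/
def IsReflection (n : ℕ) (t : ℤ → ℤ) : Prop :=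
  (∃ i j : ℤ, 1 ≤ i ∧ i < |j| ∧ |j| ≤ (n : ℤ) ∧
    t = fun m => if m = i then j else if m = j then i
      else if m = -i then -j else if m = -j then -i else m) ∨
  (∃ i : ℤ, 1 ≤ i ∧ i ≤ (n : ℤ) ∧
    t = fun m => if m = i then -i else if m = -i then i else m)

/-- `w` covers `w'` in the Bruhat order: `w' = w ∘ t` for a reflection `t` and
`ℓ(w) = ℓ(w') + 1`. -/
def Covers (n : ℕ) (w w' : ℤ → ℤ) : Prop :=
  ∃ t : ℤ → ℤ, IsReflection n t ∧ w' = w ∘ t ∧ len n w = len n w' + 1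

/-- Multiset of entries of `w` at positions `1, …, k`. -/
noncomputable def entriesLow (k : ℕ) (w : ℤ → ℤ) : Multiset ℤ :=
  (Finset.Icc (1 : ℤ) (k : ℤ)).val.map w

/-- Multiset of entries of `w` at positions `k+1, …, n`. -/
noncomputable def entriesHigh (n k : ℕ) (w : ℤ → ℤ) : Multiset ℤ :=
  (Finset.Icc ((k : ℤ) + 1) (n : ℤ)).val.map w

/-- `d_i = #{j : λ_j > u_i}`, the number of negative entries of `w` at positions `> k`
whose absolute value exceeds `w i`. -/
noncomputable def dcount (n k : ℕ) (w : ℤ → ℤ) (i : ℤ) : ℕ :=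
  ((Finset.Icc ((k : ℤ) + 1) (n : ℤ)).filter (fun j => w j < 0 ∧ w i < -(w j))).card

/-- `μ_i = #{j : v_j > u_i}`, the number of positive entries of `w` at positions `> k`
exceeding `w i`. -/
noncomputable def mucount (n k : ℕ) (w : ℤ → ℤ) (i : ℤ) : ℕ :=
  ((Finset.Icc ((k : ℤ) + 1) (n : ℤ)).filter (fun j => 0 < w j ∧ w i < w j)).card

/-- `α_i = u_i - i + d_i`. -/
noncomputable def alphaPart (n k : ℕ) (w : ℤ → ℤ) (i : ℤ) : ℤ :=
  w i - i + (dcount n k w i : ℤ)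

/-- Pair of type B1: `w'` is obtained from `w` by replacing the entry `-1`
(at a position `> k`) by `1`. -/
def TypeB1 (n k : ℕ) (w w' : ℤ → ℤ) : Prop :=
  Grassmannian n k w ∧ Grassmannian n k w' ∧
  (-1 : ℤ) ∈ entriesHigh n k w ∧
  entriesLow k w' = entriesLow k w ∧
  entriesHigh n k w' = 1 ::ₘ (entriesHigh n k w).erase (-1)

/-- Pair of type B2: for some `a > 1`, `w'` is obtained from `w` by replacing the
entries `-a` and `a-1` (at positions `> k`) by `-(a-1)` and `a`. -/
def TypeB2 (n k : ℕ) (w w' : ℤ → ℤ) : Prop :=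
  Grassmannian n k w ∧ Grassmannian n k w' ∧
  ∃ a : ℤ, 1 < a ∧ (-a) ∈ entriesHigh n k w ∧ (a - 1) ∈ entriesHigh n k w ∧
    entriesLow k w' = entriesLow k w ∧
    entriesHigh n k w' =
      a ::ₘ (-(a - 1)) ::ₘ (((entriesHigh n k w).erase (-a)).erase (a - 1))

/-- Pair of type B3: for some `a > x > 0`, `w'` is obtained from `w` by exchanging
the entry `a` (at a position `≤ k`) with the entry `a - x` (at a position `> k`). -/
def TypeB3 (n k : ℕ) (w w' : ℤ → ℤ) : Prop :=
  Grassmannian n k w ∧ Grassmannian n k w' ∧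
  ∃ a x : ℤ, 0 < x ∧ x < a ∧
    a ∈ entriesLow k w ∧ (a - x) ∈ entriesHigh n k w ∧
    entriesLow k w' = (a - x) ::ₘ (entriesLow k w).erase a ∧
    entriesHigh n k w' = a ::ₘ (entriesHigh n k w).erase (a - x)

/-- Pair of type B4: for some `a > x > 0`, `w'` is obtained from `w` by replacing
the entry `a - x` (at a position `≤ k`) by `a` and the entry `-a` (at a position `> k`)
by `-(a-x)`. -/
def TypeB4 (n k : ℕ) (w w' : ℤ → ℤ) : Prop :=
  Grassmannian n k w ∧ Grassmannian n k w' ∧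
  ∃ a x : ℤ, 0 < x ∧ x < a ∧
    (a - x) ∈ entriesLow k w ∧ (-a) ∈ entriesHigh n k w ∧
    entriesLow k w' = a ::ₘ (entriesLow k w).erase (a - x) ∧
    entriesHigh n k w' = (-(a - x)) ::ₘ (entriesHigh n k w).erase (-a)

/-- The longest element `w₀` of `W_n^{(k)}`: `w₀ i = i` for `1 ≤ i ≤ k` and
`w₀ i = -(n + k + 1 - i)` for `k < i ≤ n` (extended to a signed permutation of `ℤ`). -/
def w0 (n k : ℕ) : ℤ → ℤ := fun i =>
  if (k : ℤ) < i ∧ i ≤ (n : ℤ) then -((n : ℤ) + (k : ℤ) + 1 - i)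
  else if -(n : ℤ) ≤ i ∧ i < -(k : ℤ) then (n : ℤ) + (k : ℤ) + 1 + i
  else i

/-- The simple reflection `s_i`: for `i = 0` the sign change `1 ↔ -1`, and for `i ≥ 1`
the swap `i ↔ i+1`, `-i ↔ -(i+1)`. -/
def simpleRefl (i : ℕ) : ℤ → ℤ :=
  if i = 0 then fun m => if m = 1 then -1 else if m = -1 then 1 else m
  else fun m =>
    if m = (i : ℤ) then (i : ℤ) + 1 else if m = (i : ℤ) + 1 then (i : ℤ)
    else if m = -(i : ℤ) then -(i : ℤ) - 1 else if m = -(i : ℤ) - 1 then -(i : ℤ) else m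

/-!
Right multiplication by `w₀` fixes the positions `1, …, k` and sends position `j > k` to
`-(n + k + 1 - j)`. So the dual `v ∘ w₀` has the same entries as `v` at positions `≤ k`, and the
negatives of the entries of `v` at positions `> k`, in reverse order. Under this dictionary the
exchange `a ↔ a - x` of a type B3 pair `(w, w')` is exactly the replacement
`a - x ↦ a`, `-a ↦ -(a - x)` that makes `((w')∨, w∨)` a pair of type B4.
-/

namespace Multiset

variable {α : Type*} [DecidableEq α]

theorem mem_and_eq_cons_erase_comm {s t : Multiset α} {a b : α} :
    (a ∈ s ∧ t = b ::ₘ s.erase a) ↔ (b ∈ t ∧ s = a ::ₘ t.erase b) := by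
  have key : ∀ {s t : Multiset α} {a b : α},
      a ∈ s ∧ t = b ::ₘ s.erase a → b ∈ t ∧ s = a ::ₘ t.erase b := by
    rintro s t a b ⟨ha, rfl⟩
    exact ⟨mem_cons_self b _, by rw [erase_cons_head, cons_erase ha]⟩
  exact ⟨key, key⟩

theorem mem_and_map_eq_cons_erase_iff {β : Type*} [DecidableEq β] {f : α → β}
    (hf : Function.Injective f) {s t : Multiset α} {a b : α} :
    (f a ∈ t.map f ∧ s.map f = f b ::ₘ (t.map f).erase (f a)) ↔
      (a ∈ t ∧ s = b ::ₘ t.erase a) := by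
  rw [mem_map_of_injective hf, ← map_erase f hf, ← map_cons, (map_injective hf).eq_iff]

end Multiset

section Dual

variable {n k : ℕ}

theorem w0_of_le {i : ℤ} (h1 : 1 ≤ i) (h2 : i ≤ k) : w0 n k i = i := by
  simp only [w0]; split_ifs <;> omega

theorem w0_of_lt {i : ℤ} (h1 : (k : ℤ) < i) (h2 : i ≤ n) :
    w0 n k i = -((n : ℤ) + k + 1 - i) := by
  simp only [w0]; split_ifs <;> omega

theorem w0_involutive : Function.Involutive (w0 n k) := by
  intro i; simp only [w0]; split_ifs <;> omega

theorem w0_neg (i : ℤ) : w0 n k (-i) = -w0 n k i := by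
  simp only [w0]; split_ifs <;> omega

theorem w0_of_lt_abs {i : ℤ} (h : (n : ℤ) < |i|) : w0 n k i = i := by
  rcases lt_abs.mp h with h' | h' <;> · simp only [w0]; split_ifs <;> omega

theorem entriesLow_comp_w0 (v : ℤ → ℤ) : entriesLow k (v ∘ w0 n k) = entriesLow k v :=
  Multiset.map_congr rfl fun i hi => by
    rw [Finset.mem_val, Finset.mem_Icc] at hi
    rw [Function.comp_apply, w0_of_le hi.1 hi.2]

theorem entriesHigh_comp_w0 {v : ℤ → ℤ} (hv : ∀ i, v (-i) = -v i) :
    entriesHigh n k (v ∘ w0 n k) = (entriesHigh n k v).map Neg.neg := by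
  rw [entriesHigh, entriesHigh, Multiset.map_map]
  refine Multiset.map_eq_map_of_bij_of_nodup _ _ (Finset.nodup _) (Finset.nodup _)
    (fun j _ => (n : ℤ) + k + 1 - j) ?_ ?_ ?_ ?_
  · intro j hj; simp only [Finset.mem_val, Finset.mem_Icc] at hj ⊢; omega
  · intro i _ j _ h; omega
  · intro j hj
    simp only [Finset.mem_val, Finset.mem_Icc] at hj
    exact ⟨(n : ℤ) + k + 1 - j, by simp only [Finset.mem_val, Finset.mem_Icc]; omega, by omega⟩
  · intro j hj
    simp only [Finset.mem_val, Finset.mem_Icc] at hj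
    rw [Function.comp_apply, w0_of_lt (by omega) hj.2, hv, Function.comp_apply]

theorem Grassmannian.comp_w0 {v : ℤ → ℤ} (hv : Grassmannian n k v) :
    Grassmannian n k (v ∘ w0 n k) := by
  obtain ⟨⟨hbij, hodd, hfix⟩, hpos, hlow, hhigh⟩ := hv
  refine ⟨⟨hbij.comp w0_involutive.bijective, fun i => ?_, fun i hi => ?_⟩,
    fun i h1 h2 => ?_, fun i j h1 h2 h3 => ?_, fun i j h1 h2 h3 => ?_⟩
  · simp only [Function.comp_apply, w0_neg, hodd]
  · rw [Function.comp_apply, w0_of_lt_abs hi, hfix i hi]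
  · rw [Function.comp_apply, w0_of_le h1 h2]
    exact hpos i h1 h2
  · rw [Function.comp_apply, Function.comp_apply, w0_of_le h1 (by omega), w0_of_le (by omega) h3]
    exact hlow i j h1 h2 h3
  · rw [Function.comp_apply, Function.comp_apply, w0_of_lt h1 (by omega),
      w0_of_lt (by omega) h3, hodd, hodd, neg_lt_neg_iff]
    exact hhigh _ _ (by omega) (by omega) (by omega)

end Dual

theorem stmt_18_general (n k : ℕ) (w w' : ℤ → ℤ)
    (hw : Grassmannian n k w) (hw' : Grassmannian n k w') :
    TypeB3 n k w w' ↔ TypeB4 n k (w' ∘ w0 n k) (w ∘ w0 n k) := by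
  simp only [TypeB3, TypeB4, entriesLow_comp_w0, entriesHigh_comp_w0 hw.1.2.1,
    entriesHigh_comp_w0 hw'.1.2.1, hw, hw', hw.comp_w0, hw'.comp_w0, true_and]
  refine exists₂_congr fun a x => and_congr_right fun _ => and_congr_right fun _ => ?_
  have hLow := Multiset.mem_and_eq_cons_erase_comm (s := entriesLow k w) (t := entriesLow k w')
    (a := a) (b := a - x)
  have hHigh := (Multiset.mem_and_map_eq_cons_erase_iff neg_injective).trans
    (Multiset.mem_and_eq_cons_erase_comm (s := entriesHigh n k w) (t := entriesHigh n k w')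
      (a := a - x) (b := a)).symm
  tauto

/-- if `w` covers `w'`, then `(w, w')` is of type B3 iff the dual pair
`((w')∨, w∨)` is of type B4. -/
theorem stmt_18 (n k : ℕ) (hn : 1 ≤ n) (hk : k ≤ n) (w w' : ℤ → ℤ)
    (hw : Grassmannian n k w) (hw' : Grassmannian n k w')
    (hcov : Covers n w w') :
    TypeB3 n k w w' ↔ TypeB4 n k (w' ∘ w0 n k) (w ∘ w0 n k) :=
  stmt_18_general n k w w' hw hw'
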